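/- arXiv:2203.01109 — 7 statements merged into one kernel-verified Lean document; each statement's English description precedes it below -/
import Mathlib

section
/- Let N ≥ 2 and let a_1, …, a_N be vectors in a complex inner product space E with norm ‖·‖ induced by the inner product. Then ∑_{i=1}^N ‖a_i‖² ≥ (1/(2N − 2)) · [ (2/(N(N − 1))) · (∑_{1 ≤ i < j ≤ N} ‖a_i + a_j‖)² + ∑_{1 ≤ i < j ≤ N} ‖a_i − a_j‖² ]. -/
/-!
Summing the parallelogram law over the pairs `i < j` gives
`∑ (‖aᵢ + aⱼ‖² + ‖aᵢ - aⱼ‖²) = (2N - 2) ∑ ‖aᵢ‖²`, and Cauchy–Schwarz over the `N(N-1)/2` pairs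
bounds `(∑ ‖aᵢ + aⱼ‖)²` by `N(N-1)/2 · ∑ ‖aᵢ + aⱼ‖²`.
-/

open Finset

section PairSums

variable {ι : Type*} [Fintype ι] [LinearOrder ι]

theorem sum_filter_fst_lt_snd_add {R : Type*} [NonAssocRing R] (f : ι → R) :
    ∑ p : ι × ι with p.1 < p.2, (f p.1 + f p.2) = ((Fintype.card ι : R) - 1) * ∑ i, f i := by
  have swap : ∑ p : ι × ι with p.1 < p.2, f p.2 = ∑ p : ι × ι with p.2 < p.1, f p.1 :=
    sum_equiv (Equiv.prodComm ι ι) (by simp) (by simp)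
  have row (i : ι) : ∑ j, ((if i < j then f i else 0) + (if j < i then f i else 0)) =
      ∑ j, (f i - if j = i then f i else 0) := by
    refine sum_congr rfl fun j _ => ?_
    rcases lt_trichotomy i j with h | rfl | h
    · simp [h, h.ne', not_lt_of_gt h]
    · simp
    · simp [h, h.ne, not_lt_of_gt h]
  rw [sum_add_distrib, swap, sum_filter, sum_filter, Fintype.sum_prod_type,
    Fintype.sum_prod_type, ← sum_add_distrib, mul_sum]
  refine sum_congr rfl fun i _ => ?_
  rw [← sum_add_distrib, row, sum_sub_distrib, sum_ite_eq']
  simp [sub_mul]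

theorem sq_sum_filter_fst_lt_snd_le {K : Type*} [Field K] [LinearOrder K] [IsStrictOrderedRing K]
    (f : ι × ι → K) :
    (∑ p : ι × ι with p.1 < p.2, f p) ^ 2 ≤
      (Fintype.card ι * (Fintype.card ι - 1) / 2) * ∑ p : ι × ι with p.1 < p.2, f p ^ 2 := by
  have := sq_sum_le_card_mul_sum_sq (s := {p : ι × ι | p.1 < p.2}) (f := f)
  rwa [Fintype.card_product_filter_lt, Nat.cast_choose_two] at this

theorem sum_filter_fst_lt_snd_norm_add_sq_add_norm_sub_sq {𝕜 E : Type*} [RCLike 𝕜]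
    [NormedAddCommGroup E] [InnerProductSpace 𝕜 E] (a : ι → E) :
    ∑ p : ι × ι with p.1 < p.2, ‖a p.1 + a p.2‖ ^ 2 +
        ∑ p : ι × ι with p.1 < p.2, ‖a p.1 - a p.2‖ ^ 2 =
      (2 * Fintype.card ι - 2) * ∑ i, ‖a i‖ ^ 2 := by
  have parallelogram (x y : E) : ‖x + y‖ ^ 2 + ‖x - y‖ ^ 2 = 2 * (‖x‖ ^ 2 + ‖y‖ ^ 2) := by
    simpa only [sq] using parallelogram_law_with_norm 𝕜 x y
  rw [← sum_add_distrib, sum_congr rfl fun p _ => parallelogram (a p.1) (a p.2), ← mul_sum,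
    sum_filter_fst_lt_snd_add fun i => ‖a i‖ ^ 2]
  ring

end PairSums

open Finset in
theorem sum_sq_norm_ge_plus {E : Type*} [NormedAddCommGroup E] [InnerProductSpace ℂ E]
    (N : ℕ) (hN : 2 ≤ N) (a : Fin N → E) :
    ∑ i, ‖a i‖ ^ 2 ≥
      (1 / (2 * (N : ℝ) - 2)) *
        ((2 / ((N : ℝ) * ((N : ℝ) - 1))) *
            (∑ p ∈ univ.filter (fun p : Fin N × Fin N => p.1 < p.2), ‖a p.1 + a p.2‖) ^ 2 +
          ∑ p ∈ univ.filter (fun p : Fin N × Fin N => p.1 < p.2), ‖a p.1 - a p.2‖ ^ 2) := by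
  have parallelogram := sum_filter_fst_lt_snd_norm_add_sq_add_norm_sub_sq (𝕜 := ℂ) a
  have cauchySchwarz := sq_sum_filter_fst_lt_snd_le fun p : Fin N × Fin N => ‖a p.1 + a p.2‖
  rw [Fintype.card_fin] at parallelogram cauchySchwarz
  have hN' : (2 : ℝ) ≤ N := by exact_mod_cast hN
  have hpairs : 0 < (N : ℝ) * (N - 1) := by nlinarith
  have hsum : 2 / ((N : ℝ) * (N - 1)) *
      (∑ p : Fin N × Fin N with p.1 < p.2, ‖a p.1 + a p.2‖) ^ 2 ≤
      ∑ p : Fin N × Fin N with p.1 < p.2, ‖a p.1 + a p.2‖ ^ 2 := by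
    rw [div_mul_eq_mul_div, div_le_iff₀ hpairs]; linarith
  rw [ge_iff_le, one_div_mul_eq_div, div_le_iff₀ (by linarith)]
  linarith
end

section
/- Let N ≥ 2 and let a_1, …, a_N be vectors in a complex inner product space E with norm ‖·‖ induced by the inner product. Then ∑_{i=1}^N ‖a_i‖² ≥ (1/(2N − 2)) · [ (2/(N(N − 1))) · (∑_{1 ≤ i < j ≤ N} ‖a_i − a_j‖)² + ∑_{1 ≤ i < j ≤ N} ‖a_i + a_j‖² ]. -/
/-!
Summing the parallelogram law `‖x - y‖² + ‖x + y‖² = 2‖x‖² + 2‖y‖²` over all pairs `i < j` gives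
`∑ ‖aᵢ - aⱼ‖² + ∑ ‖aᵢ + aⱼ‖² = 2(N - 1) ∑ ‖aᵢ‖²`, since each index lies in `N - 1` pairs.
By Cauchy–Schwarz over the `N(N - 1)/2` pairs, `∑ ‖aᵢ - aⱼ‖²` dominates
`(2 / (N(N - 1))) (∑ ‖aᵢ - aⱼ‖)²`.
-/

open Finset

section PairSums

variable {ι : Type*} [Fintype ι] [LinearOrder ι]

theorem sum_filter_lt_add {R : Type*} [CommRing R] (g : ι → R) :
    ∑ p ∈ univ.filter (fun p : ι × ι => p.1 < p.2), (g p.1 + g p.2) =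
      ((Fintype.card ι : R) - 1) * ∑ i, g i := by
  have swap : ∑ p ∈ univ.filter (fun p : ι × ι => p.1 < p.2), g p.2 =
      ∑ p ∈ univ.filter (fun p : ι × ι => p.2 < p.1), g p.1 :=
    sum_equiv (Equiv.prodComm ι ι) (by simp) (by simp)
  have off_diag : ∀ i j : ι,
      (if i < j then g i else 0) + (if j < i then g i else 0) = g i - if j = i then g i else 0 := by
    intro i j
    rcases lt_trichotomy i j with hij | rfl | hji
    · simp [hij, hij.not_gt, hij.ne']
    · simp
    · simp [hji, hji.not_gt, hji.ne]
  rw [sum_add_distrib, swap, sum_filter, sum_filter, Fintype.sum_prod_type, Fintype.sum_prod_type,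
    ← sum_add_distrib]
  simp_rw [← sum_add_distrib, off_diag, sum_sub_distrib]
  simp [sub_mul, mul_sum]

theorem sum_filter_lt_norm_sub_sq_add_norm_add_sq (𝕜 : Type*) {E : Type*} [RCLike 𝕜]
    [NormedAddCommGroup E] [InnerProductSpace 𝕜 E] (a : ι → E) :
    ∑ p ∈ univ.filter (fun p : ι × ι => p.1 < p.2), ‖a p.1 - a p.2‖ ^ 2 +
        ∑ p ∈ univ.filter (fun p : ι × ι => p.1 < p.2), ‖a p.1 + a p.2‖ ^ 2 =
      2 * ((Fintype.card ι : ℝ) - 1) * ∑ i, ‖a i‖ ^ 2 := by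
  rw [← sum_add_distrib, mul_assoc, ← sum_filter_lt_add, mul_sum]
  refine sum_congr rfl fun p _ => ?_
  rw [add_comm, parallelogram_law_with_norm 𝕜]

end PairSums

open Finset in
theorem sum_sq_norm_ge_minus {E : Type*} [NormedAddCommGroup E] [InnerProductSpace ℂ E]
    (N : ℕ) (hN : 2 ≤ N) (a : Fin N → E) :
    ∑ i, ‖a i‖ ^ 2 ≥
      (1 / (2 * (N : ℝ) - 2)) *
        ((2 / ((N : ℝ) * ((N : ℝ) - 1))) *
            (∑ p ∈ univ.filter (fun p : Fin N × Fin N => p.1 < p.2), ‖a p.1 - a p.2‖) ^ 2 +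
          ∑ p ∈ univ.filter (fun p : Fin N × Fin N => p.1 < p.2), ‖a p.1 + a p.2‖ ^ 2) := by
  set S := univ.filter (fun p : Fin N × Fin N => p.1 < p.2)
  have card_S : (#S : ℝ) = N * (N - 1) / 2 := by
    rw [Fintype.card_product_filter_lt, Fintype.card_fin, Nat.cast_choose_two]
  have cauchy_schwarz : (2 / ((N : ℝ) * ((N : ℝ) - 1))) * (∑ p ∈ S, ‖a p.1 - a p.2‖) ^ 2 ≤
      ∑ p ∈ S, ‖a p.1 - a p.2‖ ^ 2 := by
    have := pow_sum_div_card_le_sum_pow (s := S) (fun p _ => norm_nonneg (a p.1 - a p.2)) 1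
    rw [pow_one, card_S, div_div_eq_mul_div] at this
    exact (le_of_eq (by ring)).trans this
  have parallelogram := sum_filter_lt_norm_sub_sq_add_norm_add_sq ℂ a
  rw [Fintype.card_fin] at parallelogram
  have denom_pos : (0 : ℝ) < 2 * N - 2 := by
    have : (2 : ℝ) ≤ N := by exact_mod_cast hN
    linarith
  rw [ge_iff_le, one_div_mul_eq_div, div_le_iff₀ denom_pos]
  linarith
end

section
/- Let N ≥ 2 and let a_1, …, a_N be vectors in a complex inner product space E with norm ‖·‖ induced by the inner product. Then ∑_{i=1}^N ‖a_i‖² ≥ (1/N) · ‖∑_{i=1}^N a_i‖² + (2/(N²(N − 1))) · (∑_{1 ≤ i < j ≤ N} ‖a_i − a_j‖)². -/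
/-!
Write `S = ∑ ‖aᵢ‖²`, `T = ‖∑ aᵢ‖²` and `Q = ∑_{i<j} ‖aᵢ - aⱼ‖²`. Expanding the squares gives the
Lagrange-type identity `Q = N S - T`, and Cauchy–Schwarz over the `N (N - 1) / 2` pairs `i < j`
bounds `(∑_{i<j} ‖aᵢ - aⱼ‖)²` by `N (N - 1) / 2 · Q`. Hence
`S - T / N = Q / N ≥ 2 / (N² (N - 1)) · (∑_{i<j} ‖aᵢ - aⱼ‖)²`.
-/

open Finset

theorem Finset.sum_sum_eq_two_nsmul_sum_filter_lt {ι M : Type*} [Fintype ι] [LinearOrder ι]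
    [AddCommMonoid M] (f : ι → ι → M) (hsymm : ∀ i j, f i j = f j i) (hdiag : ∀ i, f i i = 0) :
    ∑ i, ∑ j, f i j = 2 • ∑ p : ι × ι with p.1 < p.2, f p.1 p.2 := by
  have hswap : ∑ p : ι × ι with p.2 < p.1, f p.1 p.2 = ∑ p : ι × ι with p.1 < p.2, f p.1 p.2 :=
    sum_equiv (Equiv.prodComm ι ι) (by simp) (fun p _ => hsymm _ _)
  have hnot : ∑ p : ι × ι with p.2 < p.1, f p.1 p.2 = ∑ p : ι × ι with ¬p.1 < p.2, f p.1 p.2 :=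
    sum_subset (fun p => by simpa using le_of_lt) fun p hp hp' => by
      simp only [mem_filter, mem_univ, true_and, not_lt] at hp hp'
      rw [le_antisymm hp hp', hdiag]
  rw [← Fintype.sum_prod_type', ← sum_filter_add_sum_filter_not _ (fun p : ι × ι => p.1 < p.2),
    ← hnot, hswap, two_nsmul]

section InnerProductSpace

variable {E ι : Type*} [NormedAddCommGroup E] [Fintype ι]

theorem sum_sum_norm_sub_sq (𝕜 : Type*) [RCLike 𝕜] [InnerProductSpace 𝕜 E] (a : ι → E) :
    ∑ i, ∑ j, ‖a i - a j‖ ^ 2 = 2 * (Fintype.card ι * ∑ i, ‖a i‖ ^ 2 - ‖∑ i, a i‖ ^ 2) := by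
  have hcross : ∑ i, ∑ j, RCLike.re (inner 𝕜 (a i) (a j)) = ‖∑ i, a i‖ ^ 2 := by
    simp only [← inner_self_eq_norm_sq (𝕜 := 𝕜), sum_inner, inner_sum, map_sum]
    exact sum_comm
  simp only [norm_sub_sq (𝕜 := 𝕜), sum_add_distrib, sum_sub_distrib, sum_const, card_univ,
    nsmul_eq_mul, ← mul_sum, hcross]
  ring

theorem sum_filter_lt_norm_sub_sq (𝕜 : Type*) [RCLike 𝕜] [InnerProductSpace 𝕜 E] [LinearOrder ι]
    (a : ι → E) :
    ∑ p : ι × ι with p.1 < p.2, ‖a p.1 - a p.2‖ ^ 2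
      = Fintype.card ι * ∑ i, ‖a i‖ ^ 2 - ‖∑ i, a i‖ ^ 2 := by
  have h := sum_sum_eq_two_nsmul_sum_filter_lt (fun i j => ‖a i - a j‖ ^ 2)
    (fun i j => by rw [norm_sub_rev]) (fun i => by simp)
  rw [sum_sum_norm_sub_sq 𝕜, two_nsmul] at h
  linarith

end InnerProductSpace

theorem sq_sum_filter_lt_le_choose_two_mul {ι α : Type*} [Fintype ι] [LinearOrder ι]
    [Semiring α] [LinearOrder α] [IsStrictOrderedRing α] [ExistsAddOfLE α] (f : ι → ι → α) :
    (∑ p : ι × ι with p.1 < p.2, f p.1 p.2) ^ 2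
      ≤ (Fintype.card ι).choose 2 * ∑ p : ι × ι with p.1 < p.2, f p.1 p.2 ^ 2 := by
  rw [← Fintype.card_product_filter_lt]
  exact sq_sum_le_card_mul_sum_sq

open Finset in
theorem sum_sq_norm_ge_ren {E : Type*} [NormedAddCommGroup E] [InnerProductSpace ℂ E]
    (N : ℕ) (hN : 2 ≤ N) (a : Fin N → E) :
    ∑ i, ‖a i‖ ^ 2 ≥
      (1 / (N : ℝ)) * ‖∑ i, a i‖ ^ 2 +
        (2 / ((N : ℝ) ^ 2 * ((N : ℝ) - 1))) *
          (∑ p ∈ univ.filter (fun p : Fin N × Fin N => p.1 < p.2), ‖a p.1 - a p.2‖) ^ 2 := by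
  have hQ := sum_filter_lt_norm_sub_sq ℂ a
  have hCS := sq_sum_filter_lt_le_choose_two_mul (fun i j => ‖a i - a j‖)
  rw [hQ, Fintype.card_fin, Nat.cast_choose_two] at hCS
  have hN₁ : (1 : ℝ) < N := by exact_mod_cast hN
  calc _ ≤ 1 / (N : ℝ) * ‖∑ i, a i‖ ^ 2 + 2 / ((N : ℝ) ^ 2 * ((N : ℝ) - 1)) *
          (N * (N - 1) / 2 * (N * ∑ i, ‖a i‖ ^ 2 - ‖∑ i, a i‖ ^ 2)) := by
        gcongr
    _ = ∑ i, ‖a i‖ ^ 2 := by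
        field_simp [(sub_pos.2 hN₁).ne']
        ring
end

section
/- Let N ≥ 3 and let a_1, …, a_N be vectors in a complex inner product space E with norm ‖·‖ induced by the inner product. Then ∑_{s=1}^N ‖a_s‖² ≥ (1/(N − 2)) · [ ∑_{1 ≤ s < t ≤ N} ‖a_s + a_t‖² − (1/(N − 1)²) · (∑_{1 ≤ s < t ≤ N} ‖a_s + a_t‖)² ]. -/
/-! Write `S = ∑ ‖aₛ‖²` and `T = ∑ aₛ`. Expanding the squares gives the exact identity
`∑_{s<t} ‖aₛ + aₜ‖² = (N - 2) S + ‖T‖²`, and since `∑_{s<t} (aₛ + aₜ) = (N - 1) T`, the triangle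
inequality gives `(N - 1) ‖T‖ ≤ ∑_{s<t} ‖aₛ + aₜ‖`. Bounding `‖T‖²` by this in the identity
yields the inequality. -/

open Finset

section PairSums

variable {ι M : Type*} [Fintype ι] [LinearOrder ι] [AddCommMonoid M]

theorem sum_lt_add_swap_add_sum_diag (f : ι → ι → M) :
    ∑ p ∈ univ.filter (fun p : ι × ι => p.1 < p.2), (f p.1 p.2 + f p.2 p.1) + ∑ s, f s s =
      ∑ s, ∑ t, f s t := by
  have swap : ∑ s, ∑ t, (if s < t then f t s else 0) = ∑ s, ∑ t, if t < s then f s t else 0 :=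
    sum_comm
  have diag (s : ι) : f s s = ∑ t, if s = t then f s t else 0 := by simp
  rw [sum_add_distrib, sum_filter, sum_filter, Fintype.sum_prod_type, Fintype.sum_prod_type, swap]
  simp only [diag, ← sum_add_distrib]
  refine sum_congr rfl fun s _ => sum_congr rfl fun t _ => ?_
  rcases lt_trichotomy s t with h | rfl | h
  · simp [h, h.ne, h.not_gt]
  · simp
  · simp [h, h.ne', h.not_gt]

theorem sum_lt_add_add_sum_eq_card_nsmul (f : ι → M) :
    ∑ p ∈ univ.filter (fun p : ι × ι => p.1 < p.2), (f p.1 + f p.2) + ∑ s, f s =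
      Fintype.card ι • ∑ s, f s := by
  simpa [smul_sum] using sum_lt_add_swap_add_sum_diag fun s _ => f s

end PairSums

theorem sum_sum_norm_add_sq {𝕜 ι E : Type*} [RCLike 𝕜] [NormedAddCommGroup E]
    [InnerProductSpace 𝕜 E] [Fintype ι] (a : ι → E) :
    ∑ s, ∑ t, ‖a s + a t‖ ^ 2 = 2 * (Fintype.card ι * ∑ s, ‖a s‖ ^ 2 + ‖∑ s, a s‖ ^ 2) := by
  have hT : ‖∑ s, a s‖ ^ 2 = ∑ s, ∑ t, RCLike.re (inner 𝕜 (a s) (a t)) := by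
    rw [← inner_self_eq_norm_sq (𝕜 := 𝕜), sum_inner]
    simp only [inner_sum, map_sum]
  simp only [norm_add_sq (𝕜 := 𝕜), sum_add_distrib, hT, ← mul_sum, sum_const, card_univ,
    nsmul_eq_mul]
  ring

theorem sum_lt_norm_add_sq_eq {𝕜 ι E : Type*} [RCLike 𝕜] [NormedAddCommGroup E]
    [InnerProductSpace 𝕜 E] [Fintype ι] [LinearOrder ι] (a : ι → E) :
    ∑ p ∈ univ.filter (fun p : ι × ι => p.1 < p.2), ‖a p.1 + a p.2‖ ^ 2 =
      ((Fintype.card ι : ℝ) - 2) * ∑ s, ‖a s‖ ^ 2 + ‖∑ s, a s‖ ^ 2 := by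
  have h := sum_lt_add_swap_add_sum_diag fun s t => ‖a s + a t‖ ^ 2
  have double (x : E) : ‖x + x‖ ^ 2 = 4 * ‖x‖ ^ 2 := by
    rw [← two_smul 𝕜 x, norm_smul, RCLike.norm_two]; ring
  simp only [add_comm (a _) (a _), ← two_mul, ← mul_sum, double,
    sum_sum_norm_add_sq (𝕜 := 𝕜)] at h
  linarith

theorem card_sub_one_mul_norm_sum_le {ι E : Type*} [Fintype ι] [LinearOrder ι]
    [SeminormedAddCommGroup E] [NormedSpace ℝ E] (a : ι → E) :
    ((Fintype.card ι : ℝ) - 1) * ‖∑ s, a s‖ ≤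
      ∑ p ∈ univ.filter (fun p : ι × ι => p.1 < p.2), ‖a p.1 + a p.2‖ := by
  have h : ∑ p ∈ univ.filter (fun p : ι × ι => p.1 < p.2), (a p.1 + a p.2) =
      ((Fintype.card ι : ℝ) - 1) • ∑ s, a s := by
    rw [sub_smul, one_smul, Nat.cast_smul_eq_nsmul, ← sum_lt_add_add_sum_eq_card_nsmul,
      add_sub_cancel_right]
  calc ((Fintype.card ι : ℝ) - 1) * ‖∑ s, a s‖
      ≤ |(Fintype.card ι : ℝ) - 1| * ‖∑ s, a s‖ := by gcongr; exact le_abs_self _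
    _ = ‖∑ p ∈ univ.filter (fun p : ι × ι => p.1 < p.2), (a p.1 + a p.2)‖ := by
      rw [h, norm_smul, Real.norm_eq_abs]
    _ ≤ _ := norm_sum_le _ _

open Finset in
theorem sum_sq_norm_ge_lb1 {E : Type*} [NormedAddCommGroup E] [InnerProductSpace ℂ E]
    (N : ℕ) (hN : 3 ≤ N) (a : Fin N → E) :
    ∑ s, ‖a s‖ ^ 2 ≥
      (1 / ((N : ℝ) - 2)) *
        ((∑ p ∈ univ.filter (fun p : Fin N × Fin N => p.1 < p.2), ‖a p.1 + a p.2‖ ^ 2) -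
          (1 / ((N : ℝ) - 1) ^ 2) *
            (∑ p ∈ univ.filter (fun p : Fin N × Fin N => p.1 < p.2), ‖a p.1 + a p.2‖) ^ 2) := by
  have hN' : (3 : ℝ) ≤ N := by exact_mod_cast hN
  have key := sum_lt_norm_add_sq_eq (𝕜 := ℂ) a
  have bound := card_sub_one_mul_norm_sum_le a
  rw [Fintype.card_fin] at key bound
  have hsq : ‖∑ s, a s‖ ^ 2 ≤ 1 / ((N : ℝ) - 1) ^ 2 *
      (∑ p ∈ univ.filter (fun p : Fin N × Fin N => p.1 < p.2), ‖a p.1 + a p.2‖) ^ 2 := by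
    rw [one_div_mul_eq_div, le_div_iff₀ (by nlinarith), ← mul_pow, mul_comm]
    exact pow_le_pow_left₀ (mul_nonneg (by linarith) (norm_nonneg _)) bound 2
  rw [ge_iff_le, one_div_mul_eq_div, div_le_iff₀ (by linarith)]
  linarith
end

section
/- Let ρ be a d×d complex positive semidefinite matrix with trace 1 and let A_1, …, A_N (N ≥ 2) be d×d Hermitian matrices. Then ∑_{i=1}^N Δ²_ρ(A_i) ≥ (1/N) · Δ²_ρ(∑_{i=1}^N A_i) + (2/(N²(N − 1))) · (∑_{1 ≤ i < j ≤ N} Δ_ρ(A_i − A_j))². -/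
open Matrix Finset
open scoped ComplexOrder

/-- The variance `Δ²_ρ(A) = Tr(ρ A²) − (Tr(ρ A))²` (a real number). -/
noncomputable def matVar {d : ℕ} (ρ A : Matrix (Fin d) (Fin d) ℂ) : ℝ :=
  ((ρ * (A * A)).trace - ((ρ * A).trace) ^ 2).re

/-- The standard deviation `Δ_ρ(A) = √(Δ²_ρ(A))`. -/
noncomputable def matDev {d : ℕ} (ρ A : Matrix (Fin d) (Fin d) ℂ) : ℝ :=
  Real.sqrt (matVar ρ A)

/-!
The variance `X ↦ Δ²_ρ(X)` is the real part of the quadratic form of the bilinear map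
`(X, Y) ↦ Tr(ρXY) − Tr(ρX) Tr(ρY)`, so polarization gives
`∑_{i,j} Δ²_ρ(A_i − A_j) = 2N ∑_i Δ²_ρ(A_i) − 2 Δ²_ρ(∑_i A_i)`. The left side is twice the sum over
the `N(N − 1)/2` pairs `i < j`, and by Cauchy–Schwarz the square of `∑_{i<j} Δ_ρ(A_i − A_j)` is at
most `N(N − 1)/2` times that sum of variances.
-/

namespace QuadraticMap

variable {R M N : Type*} [CommRing R] [AddCommGroup M] [AddCommGroup N] [Module R M] [Module R N]

theorem map_sub_eq_add_sub_polar (Q : QuadraticMap R M N) (x y : M) :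
    Q (x - y) = Q x + Q y - polar Q x y := by
  have h := polar_neg_right Q x y
  rw [polar, Q.map_neg, ← sub_eq_add_neg] at h
  rw [sub_eq_add_neg (Q x + Q y), ← h]
  abel

theorem sum_sum_map_sub {ι : Type*} [Fintype ι] (Q : QuadraticMap R M N) (x : ι → M) :
    ∑ i, ∑ j, Q (x i - x j) = (2 * Fintype.card ι) • ∑ i, Q (x i) - 2 • Q (∑ i, x i) := by
  have hpolar : ∑ i, ∑ j, polar Q (x i) (x j) = 2 • Q (∑ i, x i) := by
    rw [← polar_self, ← polarBilin_apply_apply, LinearMap.map_sum₂]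
    simp only [map_sum, polarBilin_apply_apply]
  simp only [map_sub_eq_add_sub_polar, sum_sub_distrib, sum_add_distrib, sum_const, card_univ,
    hpolar, ← smul_sum, mul_smul, two_smul]

end QuadraticMap

theorem Finset.sum_eq_two_nsmul_sum_filter_fst_lt {ι M : Type*} [Fintype ι] [LinearOrder ι]
    [AddCommMonoid M] (f : ι × ι → M) (hswap : ∀ p, f p.swap = f p) (hdiag : ∀ i, f (i, i) = 0) :
    ∑ p, f p = 2 • ∑ p with p.1 < p.2, f p := by
  have hsplit : ∀ p : ι × ι,
      f p = (if p.1 < p.2 then f p else 0) + (if p.2 < p.1 then f p else 0) := by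
    rintro ⟨i, j⟩
    rcases lt_trichotomy i j with h | rfl | h
    · simp [h, h.not_gt]
    · simp [hdiag]
    · simp [h, h.not_gt]
  have hflip : ∑ p : ι × ι, (if p.2 < p.1 then f p else 0) =
      ∑ p : ι × ι, (if p.1 < p.2 then f p else 0) :=
    Fintype.sum_equiv (Equiv.prodComm ι ι) _ _ fun p => by simp [hswap]
  rw [sum_congr rfl fun p _ => hsplit p, sum_add_distrib, hflip, sum_filter, two_nsmul]

theorem Finset.two_mul_card_filter_fst_lt (ι : Type*) [Fintype ι] [LinearOrder ι] :
    2 * #{p : ι × ι | p.1 < p.2} = Fintype.card ι * Fintype.card ι - Fintype.card ι := by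
  have h := sum_eq_two_nsmul_sum_filter_fst_lt (fun p : ι × ι => if p.1 ≠ p.2 then 1 else 0)
    (fun p => by simp [ne_comm]) (fun i => by simp)
  rw [sum_boole, sum_ite_of_true fun p hp => (mem_filter.1 hp).2.ne] at h
  simp only [Nat.cast_id, sum_const, smul_eq_mul, mul_one] at h
  rw [← h, ← card_univ]
  convert offDiag_card (univ : Finset ι) using 2
  ext
  simp

namespace Matrix

variable {n : Type*} [Fintype n]

noncomputable def covarianceBilin (ρ : Matrix n n ℂ) : LinearMap.BilinMap ℂ (Matrix n n ℂ) ℂ :=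
  LinearMap.mk₂ ℂ (fun X Y => (ρ * (X * Y)).trace - (ρ * X).trace * (ρ * Y).trace)
    (fun X X' Y => by simp only [Matrix.add_mul, Matrix.mul_add, trace_add]; ring)
    (fun c X Y => by simp only [Matrix.smul_mul, Matrix.mul_smul, trace_smul, smul_eq_mul]; ring)
    (fun X Y Y' => by simp only [Matrix.mul_add, trace_add]; ring)
    (fun c X Y => by simp only [Matrix.mul_smul, trace_smul, smul_eq_mul]; ring)

theorem PosSemidef.trace_mul_conjTranspose_mul_self_nonneg {ρ : Matrix n n ℂ} (hρ : ρ.PosSemidef)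
    (B : Matrix n n ℂ) : 0 ≤ (ρ * (Bᴴ * B)).trace := by
  rw [← Matrix.mul_assoc, trace_mul_cycle]
  exact (hρ.mul_mul_conjTranspose_same B).trace_nonneg

theorem IsHermitian.star_trace_mul {ρ A : Matrix n n ℂ} (hρ : ρ.IsHermitian) (hA : A.IsHermitian) :
    star (ρ * A).trace = (ρ * A).trace := by
  rw [← trace_conjTranspose, conjTranspose_mul, hρ.eq, hA.eq, trace_mul_comm]

end Matrix

section Variance

variable {d : ℕ}

theorem matVar_eq_re_covarianceBilin (ρ X : Matrix (Fin d) (Fin d) ℂ) :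
    matVar ρ X = (covarianceBilin ρ X X).re := by
  simp [matVar, covarianceBilin, sq]

theorem matVar_sub_comm (ρ X Y : Matrix (Fin d) (Fin d) ℂ) :
    matVar ρ (X - Y) = matVar ρ (Y - X) := by
  simp only [matVar_eq_re_covarianceBilin, ← LinearMap.BilinMap.toQuadraticMap_apply,
    QuadraticMap.map_sub]

theorem matVar_nonneg {ρ A : Matrix (Fin d) (Fin d) ℂ} (hρ : ρ.PosSemidef) (hTr : ρ.trace = 1)
    (hA : A.IsHermitian) : 0 ≤ matVar ρ A := by
  set t := (ρ * A).trace
  set B := A - t • (1 : Matrix (Fin d) (Fin d) ℂ)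
  have ht : star t = t := hρ.1.star_trace_mul hA
  have hB : B.IsHermitian := by
    simp only [IsHermitian, B, conjTranspose_sub, conjTranspose_smul, conjTranspose_one, hA.eq, ht]
  have hcentered : (ρ * (Bᴴ * B)).trace = (ρ * (A * A)).trace - t ^ 2 := by
    simp only [hB.eq, B, Matrix.mul_sub, Matrix.sub_mul, Matrix.mul_smul, Matrix.smul_mul,
      Matrix.mul_one, Matrix.one_mul, trace_sub, trace_smul, smul_eq_mul, hTr]
    ring
  have h := hρ.trace_mul_conjTranspose_mul_self_nonneg B
  rw [hcentered] at h
  exact (Complex.nonneg_iff.1 h).1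

theorem sum_sum_matVar_sub {ι : Type*} [Fintype ι] (ρ : Matrix (Fin d) (Fin d) ℂ)
    (A : ι → Matrix (Fin d) (Fin d) ℂ) :
    ∑ i, ∑ j, matVar ρ (A i - A j) =
      2 * Fintype.card ι * ∑ i, matVar ρ (A i) - 2 * matVar ρ (∑ i, A i) := by
  have h := congrArg Complex.re ((covarianceBilin ρ).toQuadraticMap.sum_sum_map_sub A)
  simpa [matVar_eq_re_covarianceBilin, Complex.re_sum] using h

end Variance

theorem variance_uncertainty_ren (d N : ℕ) (hN : 2 ≤ N)
    (ρ : Matrix (Fin d) (Fin d) ℂ) (hρ : ρ.PosSemidef) (hTr : ρ.trace = 1)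
    (A : Fin N → Matrix (Fin d) (Fin d) ℂ) (hA : ∀ i, (A i).IsHermitian) :
    ∑ i, matVar ρ (A i) ≥
      (1 / (N : ℝ)) * matVar ρ (∑ i, A i) +
        (2 / ((N : ℝ) ^ 2 * ((N : ℝ) - 1))) *
          (∑ p ∈ univ.filter (fun p : Fin N × Fin N => p.1 < p.2),
            matDev ρ (A p.1 - A p.2)) ^ 2 := by
  set s := univ.filter (fun p : Fin N × Fin N => p.1 < p.2)
  set V := ∑ i, matVar ρ (A i)
  set W := matVar ρ (∑ i, A i)
  set P := ∑ p ∈ s, matDev ρ (A p.1 - A p.2)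
  set Q := ∑ p ∈ s, matVar ρ (A p.1 - A p.2)
  have hQ : 2 * Q = 2 * N * V - 2 * W := by
    have h := sum_sum_matVar_sub ρ A
    rwa [Fintype.card_fin, ← Fintype.sum_prod_type',
      sum_eq_two_nsmul_sum_filter_fst_lt _ (fun p => matVar_sub_comm _ _ _)
        (fun i => by simp [matVar]), nsmul_eq_mul, Nat.cast_ofNat] at h
  have hCS : P ^ 2 ≤ #s * Q := by
    refine (sq_sum_le_card_mul_sum_sq ..).trans_eq ?_
    simp only [matDev, Real.sq_sqrt (matVar_nonneg hρ hTr ((hA _).sub (hA _))), Q]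
  have hcard : 2 * (#s : ℝ) = N * (N - 1) := by
    have h := two_mul_card_filter_fst_lt (Fin N)
    rw [Fintype.card_fin] at h
    rw [← Nat.cast_ofNat, ← Nat.cast_mul, h, Nat.cast_sub (Nat.le_mul_self N)]
    push_cast
    ring
  have hN1 : (0 : ℝ) < N - 1 := by
    rw [sub_pos]
    exact_mod_cast hN
  calc 1 / (N : ℝ) * W + 2 / ((N : ℝ) ^ 2 * (N - 1)) * P ^ 2
      ≤ 1 / (N : ℝ) * W + 2 / ((N : ℝ) ^ 2 * (N - 1)) * (#s * Q) := by gcongr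
    _ = V := by
      rw [show (#s : ℝ) = N * (N - 1) / 2 by linarith, show Q = N * V - W by linarith]
      field_simp
      ring
end

section
/- Let ρ be a d×d complex positive semidefinite matrix with trace 1, let 0 < α < 1, and let Φ_1, …, Φ_N (N ≥ 3) be quantum channels, where Φ_s has Kraus operators K^s_1, …, K^s_n (d×d complex matrices with ∑_{i=1}^n (K^s_i)† K^s_i = I). Then for all permutations π_1, …, π_N of {1, …, n}: ∑_{s=1}^N I^α_ρ(Φ_s) ≥ (1/(N − 2)) · [ ∑_{1 ≤ s < t ≤ N} ∑_{i=1}^n I^α_ρ(K^s_{π_s(i)} + K^t_{π_t(i)}) − (1/(N − 1)²) · (∑_{1 ≤ s < t ≤ N} √(∑_{i=1}^n I^α_ρ(K^s_{π_s(i)} + K^t_{π_t(i)})))² ], where √ denotes the real square root. -/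
/-!
In an eigenbasis of `ρ`, `I^α_ρ(K) = ∑_{j,k} c_{jk} |K_{kj}|²` with weights
`c_{jk} = (λ_j^α - λ_k^α)(λ_j^{1-α} - λ_k^{1-α}) / 2 ≥ 0`, so `I^α_ρ` is the squared norm of an
additive map into a Hilbert space. Stacking the permuted Kraus operators of `Φ_s` gives vectors
`v_s` with `I^α_ρ(Φ_s) = ‖v_s‖²` and `∑_i I^α_ρ(K^s_{π_s(i)} + K^t_{π_t(i)}) = ‖v_s + v_t‖²`.
For any `N` vectors, `∑_{s<t} ‖v_s + v_t‖² = (N - 2) ∑_s ‖v_s‖² + ‖∑_s v_s‖²`, and since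
`∑_{s<t} (v_s + v_t) = (N - 1) ∑_s v_s`, the triangle inequality gives
`(N - 1) ‖∑_s v_s‖ ≤ ∑_{s<t} ‖v_s + v_t‖`.
-/

open Matrix Finset
open scoped ComplexOrder

/-- `ρ^α` via the continuous functional calculus applied to `t ↦ t ^ α`. -/
noncomputable def mpow {d : ℕ} (ρ : Matrix (Fin d) (Fin d) ℂ) (α : ℝ) :
    Matrix (Fin d) (Fin d) ℂ :=
  cfc (fun t : ℝ => t ^ α) ρ

/-- The Wigner–Yanase–Dyson skew information
`I^α_ρ(K) = −(1/2) Tr([ρ^α, K†] [ρ^{1−α}, K])` of an arbitrary matrix `K`. -/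
noncomputable def wyd {d : ℕ} (ρ : Matrix (Fin d) (Fin d) ℂ) (α : ℝ)
    (K : Matrix (Fin d) (Fin d) ℂ) : ℝ :=
  (-(1 / 2 : ℂ) *
    ((mpow ρ α * Kᴴ - Kᴴ * mpow ρ α) * (mpow ρ (1 - α) * K - K * mpow ρ (1 - α))).trace).re

section PairSums

variable {ι : Type*} [Fintype ι] [LinearOrder ι]

theorem sum_sum_eq_sum_lt_add_sum_diag {M : Type*} [AddCommMonoid M] (g : ι → ι → M) :
    ∑ s, ∑ t, g s t =
      ∑ p ∈ univ.filter (fun p : ι × ι => p.1 < p.2), (g p.1 p.2 + g p.2 p.1) + ∑ s, g s s := by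
  have swap : ∑ p ∈ univ.filter (fun p : ι × ι => p.1 < p.2), g p.2 p.1 =
      ∑ p ∈ univ.filter (fun p : ι × ι => p.2 < p.1), g p.1 p.2 :=
    Finset.sum_nbij' Prod.swap Prod.swap (by simp) (by simp) (by simp) (by simp) (by simp)
  have diag : ∑ p ∈ univ.filter (fun p : ι × ι => p.1 = p.2), g p.1 p.2 = ∑ s, g s s := by
    rw [Finset.sum_filter, Fintype.sum_prod_type]
    simp
  have split : ∑ p ∈ univ.filter (fun p : ι × ι => ¬p.1 < p.2), g p.1 p.2 =
      ∑ p ∈ univ.filter (fun p : ι × ι => p.2 < p.1), g p.1 p.2 +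
        ∑ p ∈ univ.filter (fun p : ι × ι => p.1 = p.2), g p.1 p.2 := by
    rw [← Finset.sum_filter_add_sum_filter_not _ (fun p : ι × ι => p.2 < p.1),
      Finset.filter_filter, Finset.filter_filter]
    congr 2 <;> ext p <;> simp only [mem_filter, mem_univ, true_and, not_lt] <;> grind
  rw [← Fintype.sum_prod_type', ← Finset.sum_filter_add_sum_filter_not univ
    (fun p : ι × ι => p.1 < p.2), split, Finset.sum_add_distrib, swap, diag, add_assoc]

theorem sum_lt_add_add_sum {M : Type*} [AddCommMonoid M] (f : ι → M) :
    ∑ p ∈ univ.filter (fun p : ι × ι => p.1 < p.2), (f p.1 + f p.2) + ∑ s, f s =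
      Fintype.card ι • ∑ s, f s := by
  simpa [Finset.smul_sum] using (sum_sum_eq_sum_lt_add_sum_diag fun s (_ : ι) => f s).symm

end PairSums

section InnerProductSpace

open scoped RealInnerProductSpace

variable {ι E : Type*} [Fintype ι] [LinearOrder ι] [NormedAddCommGroup E] [InnerProductSpace ℝ E]

theorem sum_lt_norm_add_sq (v : ι → E) :
    ∑ p ∈ univ.filter (fun p : ι × ι => p.1 < p.2), ‖v p.1 + v p.2‖ ^ 2 =
      ((Fintype.card ι : ℝ) - 2) * ∑ s, ‖v s‖ ^ 2 + ‖∑ s, v s‖ ^ 2 := by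
  have norms := sum_lt_add_add_sum fun s => ‖v s‖ ^ 2
  have inners := sum_sum_eq_sum_lt_add_sum_diag fun s t => ⟪v s, v t⟫
  simp only [← sum_inner, ← inner_sum, real_inner_self_eq_norm_sq, nsmul_eq_mul] at inners norms
  have expand (x y : E) : ‖x + y‖ ^ 2 = (‖x‖ ^ 2 + ‖y‖ ^ 2) + (⟪x, y⟫ + ⟪y, x⟫) := by
    rw [norm_add_sq_real, real_inner_comm]; ring
  simp only [expand]
  rw [Finset.sum_add_distrib]
  linarith

theorem sum_lt_add_eq_smul (v : ι → E) :
    ∑ p ∈ univ.filter (fun p : ι × ι => p.1 < p.2), (v p.1 + v p.2) =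
      ((Fintype.card ι : ℝ) - 1) • ∑ s, v s := by
  rw [sub_smul, one_smul, Nat.cast_smul_eq_nsmul, ← sum_lt_add_add_sum, add_sub_cancel_right]

theorem sum_norm_sq_ge_of_three_le_card (hι : 3 ≤ Fintype.card ι) (v : ι → E) :
    ∑ s, ‖v s‖ ^ 2 ≥
      (1 / ((Fintype.card ι : ℝ) - 2)) *
        ((∑ p ∈ univ.filter (fun p : ι × ι => p.1 < p.2), ‖v p.1 + v p.2‖ ^ 2) -
          (1 / ((Fintype.card ι : ℝ) - 1) ^ 2) *
            (∑ p ∈ univ.filter (fun p : ι × ι => p.1 < p.2), ‖v p.1 + v p.2‖) ^ 2) := by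
  have hN : (3 : ℝ) ≤ Fintype.card ι := by exact_mod_cast hι
  set N : ℝ := (Fintype.card ι : ℝ)
  have triangle : (N - 1) * ‖∑ s, v s‖ ≤
      ∑ p ∈ univ.filter (fun p : ι × ι => p.1 < p.2), ‖v p.1 + v p.2‖ := by
    calc (N - 1) * ‖∑ s, v s‖ = ‖(N - 1) • ∑ s, v s‖ := by
          rw [norm_smul, Real.norm_of_nonneg (by linarith)]
      _ = ‖∑ p ∈ univ.filter (fun p : ι × ι => p.1 < p.2), (v p.1 + v p.2)‖ := by
          rw [sum_lt_add_eq_smul]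
      _ ≤ _ := norm_sum_le _ _
  have hsq : ‖∑ s, v s‖ ^ 2 ≤ 1 / (N - 1) ^ 2 *
      (∑ p ∈ univ.filter (fun p : ι × ι => p.1 < p.2), ‖v p.1 + v p.2‖) ^ 2 := by
    rw [one_div_mul_eq_div, le_div_iff₀ (by nlinarith), ← mul_pow, mul_comm]
    exact pow_le_pow_left₀ (by nlinarith [norm_nonneg (∑ s, v s)]) triangle 2
  rw [sum_lt_norm_add_sq, ge_iff_le, one_div_mul_eq_div, div_le_iff₀ (by linarith)]
  linarith

end InnerProductSpace

theorem trace_commutator_diagonal_mul_commutator_diagonal {n R : Type*} [Fintype n]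
    [DecidableEq n] [CommRing R] [StarRing R] (a b : n → R) (M : Matrix n n R) :
    ((diagonal a * Mᴴ - Mᴴ * diagonal a) * (diagonal b * M - M * diagonal b)).trace =
      ∑ j, ∑ k, (a j - a k) * (b k - b j) * (star (M k j) * M k j) := by
  refine Finset.sum_congr rfl fun j _ => ?_
  rw [diag_apply, mul_apply]
  refine Finset.sum_congr rfl fun k _ => ?_
  simp only [Matrix.sub_apply, diagonal_mul, mul_diagonal, conjTranspose_apply]
  ring

namespace Matrix.IsHermitian

variable {d : ℕ} {ρ : Matrix (Fin d) (Fin d) ℂ}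

theorem mpow_eq_conjStarAlgAut (hρ : ρ.IsHermitian) (β : ℝ) :
    mpow ρ β = Unitary.conjStarAlgAut ℂ _ hρ.eigenvectorUnitary
      (diagonal fun i => ((hρ.eigenvalues i ^ β : ℝ) : ℂ)) := by
  rw [mpow, hρ.cfc_eq]
  rfl

theorem wyd_eq_sum_eigenvalues (hρ : ρ.IsHermitian) (α : ℝ) (K : Matrix (Fin d) (Fin d) ℂ) :
    wyd ρ α K = ∑ j, ∑ k,
      (hρ.eigenvalues j ^ α - hρ.eigenvalues k ^ α) *
        (hρ.eigenvalues j ^ (1 - α) - hρ.eigenvalues k ^ (1 - α)) / 2 *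
        Complex.normSq ((Unitary.conjStarAlgAut ℂ _ hρ.eigenvectorUnitary).symm K k j) := by
  set φ := Unitary.conjStarAlgAut ℂ (Matrix (Fin d) (Fin d) ℂ) hρ.eigenvectorUnitary
  set M := φ.symm K
  have hK : K = φ M := (φ.apply_symm_apply K).symm
  have hKH : Kᴴ = φ Mᴴ := by rw [hK, ← star_eq_conjTranspose, ← map_star]; rfl
  have trace_φ (X : Matrix (Fin d) (Fin d) ℂ) : (φ X).trace = X.trace := by
    rw [Unitary.conjStarAlgAut_apply, trace_mul_cycle, Unitary.coe_star_mul_self, one_mul]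
  rw [wyd, mpow_eq_conjStarAlgAut hρ, mpow_eq_conjStarAlgAut hρ, hKH, hK, ← map_mul, ← map_mul,
    ← map_sub, ← map_mul, ← map_mul, ← map_sub, ← map_mul, trace_φ,
    trace_commutator_diagonal_mul_commutator_diagonal, Finset.mul_sum]
  simp only [Finset.mul_sum, Complex.re_sum]
  refine Finset.sum_congr rfl fun j _ => Finset.sum_congr rfl fun k _ => ?_
  rw [RCLike.star_def, mul_comm (starRingEnd ℂ _), Complex.mul_conj]
  norm_cast
  rw [Complex.re_mul_ofReal]
  norm_num
  ring

end Matrix.IsHermitian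

theorem rpow_sub_rpow_mul_rpow_sub_rpow_nonneg {a b p q : ℝ} (ha : 0 ≤ a) (hb : 0 ≤ b)
    (hp : 0 ≤ p) (hq : 0 ≤ q) : 0 ≤ (a ^ p - b ^ p) * (a ^ q - b ^ q) := by
  rcases le_total a b with hab | hba
  · exact mul_nonneg_of_nonpos_of_nonpos (sub_nonpos.2 (Real.rpow_le_rpow ha hab hp))
      (sub_nonpos.2 (Real.rpow_le_rpow ha hab hq))
  · exact mul_nonneg (sub_nonneg.2 (Real.rpow_le_rpow hb hba hp))
      (sub_nonneg.2 (Real.rpow_le_rpow hb hba hq))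

theorem exists_addMonoidHom_wyd_eq_norm_sq {d : ℕ} {ρ : Matrix (Fin d) (Fin d) ℂ}
    (hρ : ρ.PosSemidef) {α : ℝ} (hα0 : 0 ≤ α) (hα1 : α ≤ 1) :
    ∃ L : Matrix (Fin d) (Fin d) ℂ →+ EuclideanSpace ℂ (Fin d × Fin d),
      ∀ K, wyd ρ α K = ‖L K‖ ^ 2 := by
  set lam := hρ.isHermitian.eigenvalues
  set c : Fin d → Fin d → ℝ := fun j k =>
    (lam j ^ α - lam k ^ α) * (lam j ^ (1 - α) - lam k ^ (1 - α)) / 2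
  have hc (j k : Fin d) : 0 ≤ c j k :=
    div_nonneg (rpow_sub_rpow_mul_rpow_sub_rpow_nonneg (hρ.eigenvalues_nonneg j)
      (hρ.eigenvalues_nonneg k) hα0 (sub_nonneg.2 hα1)) zero_le_two
  set φ := Unitary.conjStarAlgAut ℂ (Matrix (Fin d) (Fin d) ℂ) hρ.isHermitian.eigenvectorUnitary
  refine ⟨AddMonoidHom.mk' (fun K => WithLp.toLp 2 fun jk => (√(c jk.1 jk.2) : ℂ) *
    φ.symm K jk.2 jk.1) fun A B => by ext; simp [mul_add], fun K => ?_⟩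
  rw [hρ.isHermitian.wyd_eq_sum_eigenvalues, EuclideanSpace.norm_sq_eq, Fintype.sum_prod_type]
  refine Finset.sum_congr rfl fun j _ => Finset.sum_congr rfl fun k _ => ?_
  change c j k * _ = ‖(√(c j k) : ℂ) * φ.symm K k j‖ ^ 2
  rw [norm_mul, mul_pow, Complex.norm_real, Real.norm_of_nonneg (Real.sqrt_nonneg _),
    Real.sq_sqrt (hc j k), Complex.sq_norm]

theorem channel_uncertainty_LB1_general (d n N : ℕ) (hN : 3 ≤ N)
    (ρ : Matrix (Fin d) (Fin d) ℂ) (hρ : ρ.PosSemidef)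
    (α : ℝ) (hα0 : 0 < α) (hα1 : α < 1)
    (K : Fin N → Fin n → Matrix (Fin d) (Fin d) ℂ)
    (π : Fin N → Equiv.Perm (Fin n)) :
    ∑ s, ∑ i, wyd ρ α (K s i) ≥
      (1 / ((N : ℝ) - 2)) *
        ((∑ p ∈ univ.filter (fun p : Fin N × Fin N => p.1 < p.2),
            ∑ i, wyd ρ α (K p.1 (π p.1 i) + K p.2 (π p.2 i))) -
          (1 / ((N : ℝ) - 1) ^ 2) *
            (∑ p ∈ univ.filter (fun p : Fin N × Fin N => p.1 < p.2),
              Real.sqrt (∑ i, wyd ρ α (K p.1 (π p.1 i) + K p.2 (π p.2 i)))) ^ 2) := by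
  obtain ⟨L, hL⟩ := exists_addMonoidHom_wyd_eq_norm_sq hρ hα0.le hα1.le
  let v (s : Fin N) : PiLp 2 fun _ : Fin n => EuclideanSpace ℂ (Fin d × Fin d) :=
    WithLp.toLp 2 fun i => L (K s (π s i))
  have channel (s : Fin N) : ∑ i, wyd ρ α (K s i) = ‖v s‖ ^ 2 := by
    rw [PiLp.norm_sq_eq_of_L2, ← Equiv.sum_comp (π s)]
    simp [v, hL]
  have pair (s t : Fin N) :
      ∑ i, wyd ρ α (K s (π s i) + K t (π t i)) = ‖v s + v t‖ ^ 2 := by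
    rw [PiLp.norm_sq_eq_of_L2]
    simp [v, hL]
  simp only [channel, pair, Real.sqrt_sq (norm_nonneg _)]
  simpa using sum_norm_sq_ge_of_three_le_card (by simpa using hN) v

theorem channel_uncertainty_LB1 (d n N : ℕ) (hN : 3 ≤ N)
    (ρ : Matrix (Fin d) (Fin d) ℂ) (hρ : ρ.PosSemidef) (hTr : ρ.trace = 1)
    (α : ℝ) (hα0 : 0 < α) (hα1 : α < 1)
    (K : Fin N → Fin n → Matrix (Fin d) (Fin d) ℂ)
    (hK : ∀ s, ∑ i, (K s i)ᴴ * K s i = 1)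
    (π : Fin N → Equiv.Perm (Fin n)) :
    ∑ s, ∑ i, wyd ρ α (K s i) ≥
      (1 / ((N : ℝ) - 2)) *
        ((∑ p ∈ univ.filter (fun p : Fin N × Fin N => p.1 < p.2),
            ∑ i, wyd ρ α (K p.1 (π p.1 i) + K p.2 (π p.2 i))) -
          (1 / ((N : ℝ) - 1) ^ 2) *
            (∑ p ∈ univ.filter (fun p : Fin N × Fin N => p.1 < p.2),
              Real.sqrt (∑ i, wyd ρ α (K p.1 (π p.1 i) + K p.2 (π p.2 i)))) ^ 2) :=
  channel_uncertainty_LB1_general d n N hN ρ hρ α hα0 hα1 K π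
end

section
/- Let ρ be a d×d complex positive semidefinite matrix with trace 1, let 0 < α < 1, and let U_1, …, U_N (N ≥ 2) be d×d unitary matrices. Then: ∑_{s=1}^N I^α_ρ(U_s) ≥ (1/N) · [ I^α_ρ(∑_{s=1}^N U_s) + (2/(N(N − 1))) · (∑_{1 ≤ s < t ≤ N} √(I^α_ρ(U_s − U_t)))² ], where √ denotes the real square root. -/
open Matrix Finset
open scoped ComplexOrder

/-!
For any bilinear form `B` and vectors `x₁, …, x_N` one has
`N ∑ B(xₛ, xₛ) = B(∑ xₛ, ∑ xₛ) + ∑_{s<t} B(xₛ - xₜ, xₛ - xₜ)`, and `I^α_ρ` is the diagonal of the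
real bilinear form `(K, L) ↦ Re(-½ Tr([ρ^α, K†][ρ^{1-α}, L]))`. In an eigenbasis of `ρ` with
eigenvalues `λᵢ ≥ 0` this gives `I^α_ρ(K) = ½ ∑ᵢⱼ (λᵢ^α - λⱼ^α)(λᵢ^{1-α} - λⱼ^{1-α}) |Kⱼᵢ|² ≥ 0`,
so Cauchy–Schwarz over the `N(N-1)/2` pairs `s < t` bounds
`(∑_{s<t} √I^α_ρ(Uₛ - Uₜ))²` by `N(N-1)/2 · ∑_{s<t} I^α_ρ(Uₛ - Uₜ)`.
-/

theorem Finset.sum_prod_eq_sum_lt_add_swap_add_sum_diag {ι M : Type*} [Fintype ι] [LinearOrder ι]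
    [AddCommMonoid M] (F : ι × ι → M) :
    ∑ p, F p = ∑ p : ι × ι with p.1 < p.2, (F p + F p.swap) + ∑ i, F (i, i) := by
  rw [sum_add_distrib, ← sum_filter_add_sum_filter_not univ (fun p : ι × ι => p.1 < p.2),
    ← sum_filter_add_sum_filter_not (univ.filter fun p : ι × ι => ¬ p.1 < p.2)
      (fun p : ι × ι => p.1 = p.2), add_assoc]
  congr 1
  rw [add_comm]
  congr 1
  · exact sum_equiv (Equiv.prodComm ι ι) (by grind) (fun _ _ => rfl)
  · exact sum_nbij' (fun p => p.1) (fun i => (i, i)) (by simp) (by simp) (by grind) (by simp)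
      (by grind)

namespace LinearMap.BilinForm

theorem card_mul_sum_apply_self {R M ι : Type*} [CommRing R] [AddCommGroup M] [Module R M]
    [Fintype ι] [LinearOrder ι] (B : LinearMap.BilinForm R M) (x : ι → M) :
    (Fintype.card ι : R) * ∑ i, B (x i) (x i) =
      B (∑ i, x i) (∑ i, x i) + ∑ p : ι × ι with p.1 < p.2, B (x p.1 - x p.2) (x p.1 - x p.2) := by
  have hdiag : ∑ p : ι × ι, B (x p.1) (x p.1) = (Fintype.card ι : R) * ∑ i, B (x i) (x i) := by
    simp [Fintype.sum_prod_type, mul_sum]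
  have hall : ∑ p : ι × ι, B (x p.1) (x p.2) = B (∑ i, x i) (∑ i, x i) := by
    simp only [Fintype.sum_prod_type, map_sum, LinearMap.sum_apply]
    exact sum_comm
  have hsub (p : ι × ι) : B (x p.1 - x p.2) (x p.1 - x p.2) =
      (B (x p.1) (x p.1) + B (x p.2) (x p.2)) - (B (x p.1) (x p.2) + B (x p.2) (x p.1)) := by
    simp only [map_sub, LinearMap.sub_apply]; ring
  rw [sum_prod_eq_sum_lt_add_swap_add_sum_diag] at hdiag hall
  simp only [Prod.fst_swap, Prod.snd_swap] at hdiag hall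
  rw [sum_congr rfl fun p _ => hsub p, sum_sub_distrib]
  linear_combination hall - hdiag

end LinearMap.BilinForm

section SkewForm

variable {n : Type*} [Fintype n]

noncomputable def skewForm (A B : Matrix n n ℂ) : LinearMap.BilinForm ℝ (Matrix n n ℂ) :=
  LinearMap.mk₂ ℝ (fun K L => (-(1 / 2 : ℂ) * ((A * Kᴴ - Kᴴ * A) * (B * L - L * B)).trace).re)
    (fun K K' L => by
      simp only [conjTranspose_add, mul_add, add_mul, add_sub_add_comm, trace_add, Complex.add_re])
    (fun c K L => by
      simp only [conjTranspose_smul, star_trivial, Matrix.mul_smul, smul_mul, ← smul_sub,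
        trace_smul, Complex.real_smul, mul_left_comm, Complex.re_ofReal_mul, smul_eq_mul])
    (fun K L L' => by
      simp only [mul_add, add_mul, add_sub_add_comm, trace_add, Complex.add_re])
    (fun c K L => by
      simp only [Matrix.mul_smul, smul_mul, ← smul_sub, trace_smul, Complex.real_smul,
        mul_left_comm, Complex.re_ofReal_mul, smul_eq_mul])

variable [DecidableEq n]

theorem skewForm_conjStarAlgAut (u : unitary (Matrix n n ℂ)) (A B K L : Matrix n n ℂ) :
    skewForm (Unitary.conjStarAlgAut ℂ _ u A) (Unitary.conjStarAlgAut ℂ _ u B)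
      (Unitary.conjStarAlgAut ℂ _ u K) (Unitary.conjStarAlgAut ℂ _ u L) = skewForm A B K L := by
  set φ := Unitary.conjStarAlgAut ℂ (Matrix n n ℂ) u
  have htrace (X : Matrix n n ℂ) : (φ X).trace = X.trace := by
    simp [φ, trace_mul_cycle]
  simp only [skewForm, LinearMap.mk₂_apply, ← star_eq_conjTranspose, ← map_star, ← map_mul,
    ← map_sub, htrace]

theorem Matrix.diagonal_mul_sub_mul_diagonal {R : Type*} [CommRing R] (d : n → R)
    (X : Matrix n n R) :
    diagonal d * X - X * diagonal d = of fun i j => (d i - d j) * X i j := by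
  ext i j
  simp only [Matrix.sub_apply, diagonal_mul, mul_diagonal, of_apply]
  ring

theorem skewForm_diagonal_self (a b : n → ℝ) (M : Matrix n n ℂ) :
    skewForm (diagonal (RCLike.ofReal ∘ a)) (diagonal (RCLike.ofReal ∘ b)) M M =
      ∑ i, ∑ j, (a i - a j) * (b i - b j) * Complex.normSq (M j i) / 2 := by
  simp only [skewForm, LinearMap.mk₂_apply, diagonal_mul_sub_mul_diagonal, trace, diag_apply,
    mul_apply, of_apply, conjTranspose_apply, mul_sum, Complex.re_sum]
  refine sum_congr rfl fun i _ => sum_congr rfl fun j _ => ?_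
  have hnormSq := Complex.mul_conj (M j i)
  simp only [Function.comp_apply, RCLike.ofReal_eq_complex_ofReal, Complex.star_def]
  rw [← Complex.ofReal_re ((a i - a j) * (b i - b j) * Complex.normSq (M j i) / 2)]
  congr 1
  push_cast
  linear_combination (-(1 / 2) * ((a i : ℂ) - a j) * ((b j : ℂ) - b i)) * hnormSq

theorem skewForm_cfc_self_nonneg {A : Matrix n n ℂ} (hA : A.IsHermitian) {f g : ℝ → ℝ}
    (hfg : Monovary (f ∘ hA.eigenvalues) (g ∘ hA.eigenvalues)) (K : Matrix n n ℂ) :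
    0 ≤ skewForm (cfc f A) (cfc g A) K K := by
  set φ := Unitary.conjStarAlgAut ℂ (Matrix n n ℂ) hA.eigenvectorUnitary
  rw [hA.cfc_eq, hA.cfc_eq, IsHermitian.cfc, IsHermitian.cfc, ← φ.apply_symm_apply K,
    skewForm_conjStarAlgAut, skewForm_diagonal_self]
  exact sum_nonneg fun i _ => sum_nonneg fun j _ =>
    div_nonneg (mul_nonneg (hfg.sub_mul_sub_nonneg j i) (Complex.normSq_nonneg _)) zero_le_two

end SkewForm

theorem wyd_eq_skewForm {d : ℕ} (ρ : Matrix (Fin d) (Fin d) ℂ) (α : ℝ)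
    (K : Matrix (Fin d) (Fin d) ℂ) :
    wyd ρ α K = skewForm (mpow ρ α) (mpow ρ (1 - α)) K K := rfl

theorem wyd_nonneg {d : ℕ} {ρ : Matrix (Fin d) (Fin d) ℂ} (hρ : ρ.PosSemidef) {α : ℝ}
    (hα0 : 0 ≤ α) (hα1 : α ≤ 1) (K : Matrix (Fin d) (Fin d) ℂ) : 0 ≤ wyd ρ α K := by
  rw [wyd_eq_skewForm, mpow, mpow]
  refine skewForm_cfc_self_nonneg hρ.1 (fun i j hij => ?_) K
  have hev := hρ.eigenvalues_nonneg
  simp only [Function.comp_apply] at hij ⊢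
  refine Real.rpow_le_rpow (hev i) (le_of_not_ge fun hji => hij.not_ge ?_) hα0
  exact Real.rpow_le_rpow (hev j) hji (by linarith)

theorem unitary_uncertainty_Lb2_general (d N : ℕ) (hN : 2 ≤ N)
    (ρ : Matrix (Fin d) (Fin d) ℂ) (hρ : ρ.PosSemidef)
    (α : ℝ) (hα0 : 0 < α) (hα1 : α < 1)
    (U : Fin N → Matrix (Fin d) (Fin d) ℂ) :
    ∑ s, wyd ρ α (U s) ≥
      (1 / (N : ℝ)) *
        (wyd ρ α (∑ s, U s) +
          (2 / ((N : ℝ) * ((N : ℝ) - 1))) *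
            (∑ p ∈ univ.filter (fun p : Fin N × Fin N => p.1 < p.2),
              Real.sqrt (wyd ρ α (U p.1 - U p.2))) ^ 2) := by
  have hI := wyd_nonneg hρ hα0.le hα1.le
  set P := ∑ p ∈ univ.filter (fun p : Fin N × Fin N => p.1 < p.2), wyd ρ α (U p.1 - U p.2)
  have hsum : (N : ℝ) * ∑ s, wyd ρ α (U s) = wyd ρ α (∑ s, U s) + P := by
    have h := (skewForm (mpow ρ α) (mpow ρ (1 - α))).card_mul_sum_apply_self U
    simpa only [Fintype.card_fin, ← wyd_eq_skewForm] using h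
  have hcs : (∑ p ∈ univ.filter (fun p : Fin N × Fin N => p.1 < p.2),
      Real.sqrt (wyd ρ α (U p.1 - U p.2))) ^ 2 ≤ (N : ℝ) * (N - 1) / 2 * P := by
    have := sq_sum_le_card_mul_sum_sq (s := univ.filter (fun p : Fin N × Fin N => p.1 < p.2))
      (f := fun p => Real.sqrt (wyd ρ α (U p.1 - U p.2)))
    rwa [← univ_product_univ, card_product_filter_lt, Nat.cast_choose_two, card_univ,
      Fintype.card_fin, univ_product_univ, sum_congr rfl fun p _ => Real.sq_sqrt (hI _)] at this
  have hN' : (0 : ℝ) < N * (N - 1) := by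
    have : (2 : ℝ) ≤ N := by exact_mod_cast hN
    nlinarith
  calc (1 / (N : ℝ)) * (wyd ρ α (∑ s, U s) + 2 / (N * (N - 1)) * _ ^ 2)
      ≤ (1 / (N : ℝ)) * (wyd ρ α (∑ s, U s) + P) := by
        gcongr
        rw [div_mul_eq_mul_div, div_le_iff₀ hN']
        linarith
    _ = ∑ s, wyd ρ α (U s) := by
        rw [← hsum]
        field_simp

theorem unitary_uncertainty_Lb2 (d N : ℕ) (hN : 2 ≤ N)
    (ρ : Matrix (Fin d) (Fin d) ℂ) (hρ : ρ.PosSemidef) (hTr : ρ.trace = 1)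
    (α : ℝ) (hα0 : 0 < α) (hα1 : α < 1)
    (U : Fin N → Matrix (Fin d) (Fin d) ℂ)
    (hU : ∀ s, U s ∈ Matrix.unitaryGroup (Fin d) ℂ) :
    ∑ s, wyd ρ α (U s) ≥
      (1 / (N : ℝ)) *
        (wyd ρ α (∑ s, U s) +
          (2 / ((N : ℝ) * ((N : ℝ) - 1))) *
            (∑ p ∈ univ.filter (fun p : Fin N × Fin N => p.1 < p.2),
              Real.sqrt (wyd ρ α (U p.1 - U p.2))) ^ 2) :=
  unitary_uncertainty_Lb2_general d N hN ρ hρ α hα0 hα1 U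
end
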